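/- Let 𝒮 be a nonempty set of positive definite density matrices on ℂ^n, let U_1,…,U_m be unitaries on ℂ^n such that U_k† σ U_k ∈ 𝒮 for every σ ∈ 𝒮 and every k, and let (p_1,…,p_m) be a probability vector. Define Λ(ρ) = ∑_k p_k U_k ρ U_k†. Then for every density matrix ρ on ℂ^n: inf_{σ∈𝒮} ( −tr(Λ(ρ) log₂ σ) ) ≥ inf_{σ∈𝒮} ( −tr(ρ log₂ σ) ). Equivalently, the function f(τ) = inf_{σ∈𝒮} S(τ‖σ) + S(τ) is nondecreasing under Λ. -/

import Mathlib

open Matrix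
open scoped Kronecker ComplexOrder

/-- von Neumann entropy in bits (with convention `0 * log₂ 0 = 0`). -/
noncomputable def vnEntropy {n : Type*} [Fintype n] [DecidableEq n] (A : Matrix n n ℂ) : ℝ :=
  if h : A.IsHermitian then -∑ i, h.eigenvalues i * Real.logb 2 (h.eigenvalues i) else 0

/-- `log₂` of a Hermitian matrix via the spectral functional calculus. -/
noncomputable def matLog2 {n : Type*} [Fintype n] [DecidableEq n] (A : Matrix n n ℂ) :
    Matrix n n ℂ :=
  if h : A.IsHermitian then h.cfc (Real.logb 2) else 0

/-- relative entropy `S(ρ‖σ) = tr(ρ log₂ ρ) − tr(ρ log₂ σ)` (in bits). -/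
noncomputable def relEnt {n : Type*} [Fintype n] [DecidableEq n] (ρ σ : Matrix n n ℂ) : ℝ :=
  ((ρ * matLog2 ρ).trace).re - ((ρ * matLog2 σ).trace).re

/-! Cyclicity of the trace and the covariance of the functional calculus under unitary
conjugation give `−tr(Λ(ρ) log₂ σ) = ∑ₖ pₖ (−tr(ρ log₂ (Uₖ† σ Uₖ)))`. Every `Uₖ† σ Uₖ` lies in `𝒮`,
so each term is at least the infimum over `𝒮` for `ρ`, and the weights `pₖ` sum to one. That
infimum is taken over a set bounded below by `0`, since `−log₂ σ ≥ 0` for a density matrix `σ`. -/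

namespace Matrix

variable {n : Type*} [Fintype n]

lemma trace_sum_smul_mul_mul_mul {R ι : Type*} [CommSemiring R] [Fintype ι] (p : ι → R)
    (U V : ι → Matrix n n R) (ρ X : Matrix n n R) :
    ((∑ k, p k • (U k * ρ * V k)) * X).trace = ∑ k, p k * (ρ * (V k * X * U k)).trace := by
  simp only [Finset.sum_mul, trace_sum, smul_mul_assoc, trace_smul, smul_eq_mul]
  refine Finset.sum_congr rfl fun k _ => congrArg _ ?_
  rw [mul_assoc, mul_assoc, trace_mul_comm, mul_assoc]

variable [DecidableEq n]

lemma PosSemidef.trace_mul_nonneg {𝕜 : Type*} [RCLike 𝕜] {A B : Matrix n n 𝕜}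
    (hA : A.PosSemidef) (hB : B.PosSemidef) : 0 ≤ (A * B).trace := by
  obtain ⟨C, rfl⟩ : ∃ C : Matrix n n 𝕜, B = Cᴴ * C := by
    open scoped MatrixOrder in
    exact CStarAlgebra.nonneg_iff_eq_star_mul_self.mp hB.nonneg
  rw [← mul_assoc, trace_mul_cycle]
  exact (hA.mul_mul_conjTranspose_same C).trace_nonneg

lemma PosSemidef.eigenvalues_le_re_trace {A : Matrix n n ℂ} (hA : A.PosSemidef) (i : n) :
    hA.isHermitian.eigenvalues i ≤ A.trace.re := by
  rw [hA.isHermitian.trace_eq_sum_eigenvalues, Complex.re_sum]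
  exact Finset.single_le_sum (fun j _ => hA.eigenvalues_nonneg j) (Finset.mem_univ i)

end Matrix

section MatLog2

variable {n : Type*} [Fintype n] [DecidableEq n]

lemma matLog2_eq_cfc {A : Matrix n n ℂ} (hA : A.IsHermitian) :
    matLog2 A = cfc (Real.logb 2) A := by
  rw [matLog2, dif_pos hA, hA.cfc_eq]

lemma matLog2_unitary_conj {U A : Matrix n n ℂ} (hU : U ∈ unitaryGroup n ℂ)
    (hA : A.IsHermitian) : matLog2 (Uᴴ * A * U) = Uᴴ * matLog2 A * U := by
  let φ := Unitary.conjStarAlgAut ℂ (Matrix n n ℂ) (star ⟨U, hU⟩)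
  have hφ (X : Matrix n n ℂ) : φ X = Uᴴ * X * U := Unitary.conjStarAlgAut_star_apply _ _
  have hφc : Continuous φ :=
    (continuous_const.matrix_mul continuous_id).matrix_mul continuous_const
  have hA' := isHermitian_conjTranspose_mul_mul U hA
  rw [matLog2_eq_cfc hA, matLog2_eq_cfc hA', ← hφ, ← hφ]
  exact (StarAlgHomClass.map_cfc φ _ A (finite_real_spectrum.continuousOn _) hφc hA
    ((hφ A).symm ▸ hA')).symm

open scoped MatrixOrder in
lemma neg_matLog2_posSemidef {σ : Matrix n n ℂ} (hσ : σ.PosSemidef) (htr : σ.trace = 1) :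
    (-matLog2 σ).PosSemidef := by
  rw [← nonneg_iff_posSemidef, matLog2_eq_cfc hσ.isHermitian, ← cfc_neg]
  refine cfc_nonneg fun x hx => ?_
  obtain ⟨i, rfl⟩ := hσ.isHermitian.spectrum_real_eq_range_eigenvalues ▸ hx
  have hle := hσ.eigenvalues_le_re_trace i
  rw [htr, Complex.one_re] at hle
  exact neg_nonneg.mpr (Real.logb_nonpos one_lt_two (hσ.eigenvalues_nonneg i) hle)

lemma neg_re_trace_mul_matLog2_nonneg {ρ σ : Matrix n n ℂ} (hρ : ρ.PosSemidef)
    (hσ : σ.PosSemidef) (htr : σ.trace = 1) : 0 ≤ -((ρ * matLog2 σ).trace).re := by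
  have h := hρ.trace_mul_nonneg (neg_matLog2_posSemidef hσ htr)
  rw [mul_neg, trace_neg] at h
  exact (Complex.nonneg_iff.mp h).1.trans_eq (Complex.neg_re _)

end MatLog2

lemma csInf_le_sum_mul {ι : Type*} [Fintype ι] {s : Set ℝ} (hs : BddBelow s) {x : ι → ℝ}
    (hx : ∀ k, x k ∈ s) {p : ι → ℝ} (hp : ∀ k, 0 ≤ p k) (hp1 : ∑ k, p k = 1) :
    sInf s ≤ ∑ k, p k * x k :=
  calc sInf s = ∑ k, p k * sInf s := by rw [← Finset.sum_mul, hp1, one_mul]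
    _ ≤ ∑ k, p k * x k :=
      Finset.sum_le_sum fun k _ => mul_le_mul_of_nonneg_left (csInf_le hs (hx k)) (hp k)

theorem inf_neg_trace_log_nondecreasing_under_random_unitaries_general
    {n m : ℕ}
    (𝒮 : Set (Matrix (Fin n) (Fin n) ℂ))
    (h𝒮ne : 𝒮.Nonempty)
    (h𝒮 : ∀ σ ∈ 𝒮, σ.PosDef ∧ σ.trace = 1)
    (U : Fin m → Matrix (Fin n) (Fin n) ℂ)
    (hU : ∀ k, U k ∈ Matrix.unitaryGroup (Fin n) ℂ)
    (hUinv : ∀ k, ∀ σ ∈ 𝒮, (U k)ᴴ * σ * U k ∈ 𝒮)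
    (p : Fin m → ℝ) (hp : ∀ k, 0 ≤ p k) (hpsum : ∑ k, p k = 1)
    (Λ : Matrix (Fin n) (Fin n) ℂ → Matrix (Fin n) (Fin n) ℂ)
    (hΛ : ∀ τ, Λ τ = ∑ k, (p k : ℂ) • (U k * τ * (U k)ᴴ))
    (ρ : Matrix (Fin n) (Fin n) ℂ) (hρ : ρ.PosSemidef) :
    sInf {r : ℝ | ∃ σ ∈ 𝒮, r = -((Λ ρ * matLog2 σ).trace).re} ≥
      sInf {r : ℝ | ∃ σ ∈ 𝒮, r = -((ρ * matLog2 σ).trace).re} := by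
  obtain ⟨σ₀, hσ₀⟩ := h𝒮ne
  refine le_csInf ⟨_, σ₀, hσ₀, rfl⟩ ?_
  rintro _ ⟨σ, hσ, rfl⟩
  have hbdd : BddBelow {r : ℝ | ∃ σ ∈ 𝒮, r = -((ρ * matLog2 σ).trace).re} := by
    refine ⟨0, ?_⟩
    rintro _ ⟨τ, hτ, rfl⟩
    exact neg_re_trace_mul_matLog2_nonneg hρ (h𝒮 τ hτ).1.posSemidef (h𝒮 τ hτ).2
  have hmix : -((Λ ρ * matLog2 σ).trace).re =
      ∑ k, p k * -((ρ * matLog2 ((U k)ᴴ * σ * U k)).trace).re := by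
    simp only [hΛ, trace_sum_smul_mul_mul_mul,
      matLog2_unitary_conj (hU _) (h𝒮 σ hσ).1.isHermitian, Complex.re_sum,
      Complex.re_ofReal_mul, mul_neg, Finset.sum_neg_distrib]
  rw [hmix]
  exact csInf_le_sum_mul hbdd (fun k => ⟨_, hUinv k σ hσ, rfl⟩) hp hpsum

/-- Let `𝒮` be a nonempty set of positive definite density matrices on ℂ^n,
`U_1,…,U_m` unitaries with `U_k† σ U_k ∈ 𝒮` for all `σ ∈ 𝒮` and all `k`, and `(p_k)` a
probability vector. For `Λ(ρ) = ∑_k p_k U_k ρ U_k†` and every density matrix ρ: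
`inf_{σ∈𝒮} (−tr(Λ(ρ) log₂ σ)) ≥ inf_{σ∈𝒮} (−tr(ρ log₂ σ))`. -/
theorem inf_neg_trace_log_nondecreasing_under_random_unitaries
    {n m : ℕ}
    (𝒮 : Set (Matrix (Fin n) (Fin n) ℂ))
    (h𝒮ne : 𝒮.Nonempty)
    (h𝒮 : ∀ σ ∈ 𝒮, σ.PosDef ∧ σ.trace = 1)
    (U : Fin m → Matrix (Fin n) (Fin n) ℂ)
    (hU : ∀ k, U k ∈ Matrix.unitaryGroup (Fin n) ℂ)
    (hUinv : ∀ k, ∀ σ ∈ 𝒮, (U k)ᴴ * σ * U k ∈ 𝒮)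
    (p : Fin m → ℝ) (hp : ∀ k, 0 ≤ p k) (hpsum : ∑ k, p k = 1)
    (Λ : Matrix (Fin n) (Fin n) ℂ → Matrix (Fin n) (Fin n) ℂ)
    (hΛ : ∀ τ, Λ τ = ∑ k, (p k : ℂ) • (U k * τ * (U k)ᴴ))
    (ρ : Matrix (Fin n) (Fin n) ℂ) (hρ : ρ.PosSemidef) (hρtr : ρ.trace = 1) :
    sInf {r : ℝ | ∃ σ ∈ 𝒮, r = -((Λ ρ * matLog2 σ).trace).re} ≥
      sInf {r : ℝ | ∃ σ ∈ 𝒮, r = -((ρ * matLog2 σ).trace).re} :=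
  inf_neg_trace_log_nondecreasing_under_random_unitaries_general 𝒮 h𝒮ne h𝒮 U hU hUinv p hp hpsum Λ
    hΛ ρ hρ
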